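/- Let $X$ be a set with measure $\mu$, $E \subset X$, $0 < p < q < \infty$, $0 < \gamma < \infty$, $u : E \to \mathbb{R}$, $\mathbf{k} \in [0,\infty)$. Then $\|\min\{|u|, \mathbf{k}\}\|_{L^{q,\gamma}(E)} \le \left[\frac{\gamma}{q}\left(1 - \frac{p}{q}\right)\right]^{-1/\gamma} \sup_{0 < s \le \mathbf{k}^p}\big[s\,\mu(\{x \in E : |u(x)|^p > s\})\big]^{1/q}\, \mathbf{k}^{1-p/q} \le \left[\frac{\gamma}{q}\left(1 - \frac{p}{q}\right)\right]^{-1/\gamma} [u]_{L^p_w(E)}^{p/q}\, \mathbf{k}^{1-p/q}$. -/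

import Mathlib

/-!
For `σ < k ^ q` the superlevel set `{min (|u|, k) ^ q > σ}` is the superlevel set `{|u| ^ p > s}`
with `s = σ ^ (p / q) ≤ k ^ p`, whose measure is at most `S / s` for the weak-type supremum `S`
over `(0, k ^ p]`; for `σ ≥ k ^ q` it is empty. Hence the Lorentz integrand is bounded by
`S ^ (γ / q) σ ^ (α - 1)` on `(0, k ^ q)`, `α = γ / q (1 - p / q)`, and vanishes beyond, so the
integral is at most `S ^ (γ / q) k ^ (q α) / α`. The second inequality only enlarges the range
of the supremum.
-/

open MeasureTheory Set

lemma lintegral_Ioo_ofReal_rpow_sub_one {T α : ℝ} (hT : 0 ≤ T) (hα : 0 < α) :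
    ∫⁻ σ in Ioo (0:ℝ) T, ENNReal.ofReal (σ ^ (α - 1)) = ENNReal.ofReal (T ^ α / α) := by
  have hα' : (-1:ℝ) < α - 1 := by linarith
  have hint : IntegrableOn (fun σ : ℝ => σ ^ (α - 1)) (Ioo 0 T) :=
    ((intervalIntegrable_iff_integrableOn_Ioc_of_le hT).mp
      (intervalIntegral.intervalIntegrable_rpow' hα')).mono_set Ioo_subset_Ioc_self
  rw [← ofReal_integral_eq_lintegral_ofReal hint
    (ae_restrict_of_forall_mem measurableSet_Ioo fun σ hσ => Real.rpow_nonneg hσ.1.le _),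
    ← integral_Ioc_eq_integral_Ioo, ← intervalIntegral.integral_of_le hT,
    integral_rpow (Or.inl hα'), sub_add_cancel, Real.zero_rpow hα.ne', sub_zero]

lemma lt_min_rpow_iff {a k σ p q : ℝ} (ha : 0 ≤ a) (hk : 0 ≤ k) (hσ : 0 ≤ σ) (hσk : σ < k ^ q)
    (hp : 0 < p) (hq : 0 < q) : σ < (min a k) ^ q ↔ σ ^ (p / q) < a ^ p := by
  have hmin : σ < (min a k) ^ q ↔ σ < a ^ q := by
    rcases le_total a k with h | h
    · rw [min_eq_left h]
    · rw [min_eq_right h]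
      exact ⟨fun _ => hσk.trans_le (Real.rpow_le_rpow hk h hq.le), fun _ => hσk⟩
  rw [hmin, ← Real.rpow_lt_rpow_iff hσ (Real.rpow_nonneg ha q) (div_pos hp hq),
    ← Real.rpow_mul ha, mul_div_cancel₀ _ hq.ne']

lemma setOf_lt_min_rpow_eq_empty {X : Type*} {E : Set X} {u : X → ℝ} {k q σ : ℝ} (hk : 0 ≤ k)
    (hq : 0 ≤ q) (hσ : k ^ q ≤ σ) : {x ∈ E | σ < (min |u x| k) ^ q} = ∅ :=
  eq_empty_of_forall_notMem fun _ hx => hx.2.not_ge <|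
    (Real.rpow_le_rpow (le_min (abs_nonneg _) hk) (min_le_right _ _) hq).trans hσ

section Distribution

variable {X : Type*} [MeasurableSpace X] {μ : Measure X} {E : Set X} {u : X → ℝ}
  {p q γ k σ : ℝ} {S : ENNReal}

lemma measure_lt_min_rpow_le
    (hS : ∀ s ∈ Ioc 0 (k ^ p), ENNReal.ofReal s * μ {x ∈ E | s < |u x| ^ p} ≤ S)
    (hk : 0 ≤ k) (hp : 0 < p) (hq : 0 < q) (hσ : 0 < σ) (hσk : σ < k ^ q) :
    μ {x ∈ E | σ < (min |u x| k) ^ q} ≤ S / ENNReal.ofReal (σ ^ (p / q)) := by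
  have hs : 0 < σ ^ (p / q) := Real.rpow_pos_of_pos hσ _
  have hsk : σ ^ (p / q) ≤ k ^ p := by
    have := Real.rpow_le_rpow hσ.le hσk.le (div_pos hp hq).le
    rwa [← Real.rpow_mul hk, mul_div_cancel₀ _ hq.ne'] at this
  have hset : {x ∈ E | σ < (min |u x| k) ^ q} = {x ∈ E | σ ^ (p / q) < |u x| ^ p} := by
    ext x
    simp only [lt_min_rpow_iff (abs_nonneg _) hk hσ.le hσk hp hq]
  rw [hset, ENNReal.le_div_iff_mul_le (Or.inl (by simpa using hs)) (Or.inl ENNReal.ofReal_ne_top),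
    mul_comm]
  exact hS _ ⟨hs, hsk⟩

lemma measure_lt_min_rpow_mul_le_indicator
    (hS : ∀ s ∈ Ioc 0 (k ^ p), ENNReal.ofReal s * μ {x ∈ E | s < |u x| ^ p} ≤ S)
    (hk : 0 ≤ k) (hp : 0 < p) (hq : 0 < q) (hγ : 0 < γ) (hσ : 0 < σ) :
    μ {x ∈ E | σ < (min |u x| k) ^ q} ^ (γ / q) * ENNReal.ofReal (σ ^ (γ / q - 1)) ≤
      (Ioo 0 (k ^ q)).indicator
        (fun σ => S ^ (γ / q) * ENNReal.ofReal (σ ^ (γ / q * (1 - p / q) - 1))) σ := by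
  have hγq : 0 < γ / q := div_pos hγ hq
  by_cases hσk : σ < k ^ q
  · rw [indicator_of_mem (mem_Ioo.2 ⟨hσ, hσk⟩)]
    have hs : 0 < σ ^ (p / q) := Real.rpow_pos_of_pos hσ _
    calc μ {x ∈ E | σ < (min |u x| k) ^ q} ^ (γ / q) * ENNReal.ofReal (σ ^ (γ / q - 1))
        ≤ (S / ENNReal.ofReal (σ ^ (p / q))) ^ (γ / q) * ENNReal.ofReal (σ ^ (γ / q - 1)) := by
          gcongr
          exact measure_lt_min_rpow_le hS hk hp hq hσ hσk
      _ = S ^ (γ / q) * ENNReal.ofReal (σ ^ (γ / q * (1 - p / q) - 1)) := by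
          rw [ENNReal.div_rpow_of_nonneg _ _ hγq.le, div_eq_mul_inv, mul_assoc,
            ENNReal.ofReal_rpow_of_pos hs, ← ENNReal.ofReal_inv_of_pos (by positivity),
            ← ENNReal.ofReal_mul (by positivity), ← Real.rpow_mul hσ.le, ← Real.rpow_neg hσ.le,
            ← Real.rpow_add hσ]
          congr 3
          ring
  · rw [indicator_of_notMem fun h => hσk h.2, setOf_lt_min_rpow_eq_empty hk hq.le (not_lt.1 hσk),
      measure_empty, ENNReal.zero_rpow_of_pos hγq, zero_mul]

lemma lintegral_measure_lt_min_rpow_le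
    (hS : ∀ s ∈ Ioc 0 (k ^ p), ENNReal.ofReal s * μ {x ∈ E | s < |u x| ^ p} ≤ S)
    (hk : 0 ≤ k) (hp : 0 < p) (hpq : p < q) (hγ : 0 < γ) :
    ∫⁻ σ in Ioi 0, μ {x ∈ E | σ < (min |u x| k) ^ q} ^ (γ / q) *
        ENNReal.ofReal (σ ^ (γ / q - 1)) ≤
      S ^ (γ / q) * ENNReal.ofReal ((k ^ q) ^ (γ / q * (1 - p / q)) / (γ / q * (1 - p / q))) := by
  have hq : 0 < q := hp.trans hpq
  have hα : 0 < γ / q * (1 - p / q) :=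
    mul_pos (div_pos hγ hq) (sub_pos.2 ((div_lt_one hq).2 hpq))
  calc ∫⁻ σ in Ioi 0, μ {x ∈ E | σ < (min |u x| k) ^ q} ^ (γ / q) *
        ENNReal.ofReal (σ ^ (γ / q - 1))
      ≤ ∫⁻ σ in Ioi 0, (Ioo 0 (k ^ q)).indicator
          (fun σ => S ^ (γ / q) * ENNReal.ofReal (σ ^ (γ / q * (1 - p / q) - 1))) σ :=
        setLIntegral_mono ((by fun_prop : Measurable _).indicator measurableSet_Ioo)
          fun σ hσ => measure_lt_min_rpow_mul_le_indicator hS hk hp hq hγ hσ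
    _ = S ^ (γ / q) * ∫⁻ σ in Ioo 0 (k ^ q), ENNReal.ofReal (σ ^ (γ / q * (1 - p / q) - 1)) := by
        rw [lintegral_indicator measurableSet_Ioo, Measure.restrict_restrict measurableSet_Ioo,
          inter_eq_self_of_subset_left Ioo_subset_Ioi_self, lintegral_const_mul _ (by fun_prop)]
    _ = _ := by rw [lintegral_Ioo_ofReal_rpow_sub_one (Real.rpow_nonneg hk q) hα]

end Distribution

lemma rpow_mul_ofReal_rpow_one_div {S : ENNReal} {p q γ k : ℝ} (hk : 0 ≤ k) (hq : 0 < q)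
    (hpq : p < q) (hγ : 0 < γ) :
    (S ^ (γ / q) * ENNReal.ofReal ((k ^ q) ^ (γ / q * (1 - p / q)) / (γ / q * (1 - p / q))))
        ^ (1 / γ) =
      ENNReal.ofReal ((γ / q * (1 - p / q)) ^ (-(1 / γ))) *
        (S ^ (1 / q) * ENNReal.ofReal k ^ (1 - p / q)) := by
  have hpq' : 0 < 1 - p / q := sub_pos.2 ((div_lt_one hq).2 hpq)
  have hα : 0 < γ / q * (1 - p / q) := mul_pos (div_pos hγ hq) hpq'
  have hreal : ((k ^ q) ^ (γ / q * (1 - p / q)) / (γ / q * (1 - p / q))) ^ (1 / γ) =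
      (γ / q * (1 - p / q)) ^ (-(1 / γ)) * k ^ (1 - p / q) := by
    rw [Real.div_rpow (by positivity) hα.le, ← Real.rpow_mul hk, ← Real.rpow_mul hk,
      Real.rpow_neg hα.le, div_eq_mul_inv, mul_comm]
    congr 2
    field_simp
  rw [ENNReal.mul_rpow_of_nonneg _ _ (by positivity), ← ENNReal.rpow_mul,
    show γ / q * (1 / γ) = 1 / q by field_simp,
    ENNReal.ofReal_rpow_of_nonneg (div_nonneg (by positivity) hα.le) (by positivity), hreal,
    ENNReal.ofReal_mul (by positivity), ENNReal.ofReal_rpow_of_nonneg hk hpq'.le]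
  ring

/-- `‖min(|u|,k)‖_{L^{q,γ}(E)} ≤ C · sup_{0<s≤k^p}[s μ(|u|^p>s)]^{1/q} · k^{1-p/q}
  ≤ C · [u]_{L^p_w(E)}^{p/q} · k^{1-p/q}`, with `C = (γ/q·(1-p/q))^{-1/γ}`. -/
theorem lorentz_min_le {X : Type*} [MeasurableSpace X] (μ : Measure X) (E : Set X)
    (p q γ : ℝ) (hp : 0 < p) (hpq : p < q) (hγ : 0 < γ)
    (u : X → ℝ) (k : ℝ) (hk : 0 ≤ k) :
    (∫⁻ σ in Ioi (0:ℝ),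
        (μ {x ∈ E | σ < (min |u x| k) ^ q}) ^ (γ / q) *
          ENNReal.ofReal (σ ^ (γ / q - 1))) ^ (1 / γ) ≤
      ENNReal.ofReal ((γ / q * (1 - p / q)) ^ (-(1 / γ))) *
        ((⨆ s ∈ Ioc (0:ℝ) (k ^ p), ENNReal.ofReal s * μ {x ∈ E | s < |u x| ^ p}) ^ (1 / q) *
          ENNReal.ofReal k ^ (1 - p / q)) ∧
    ENNReal.ofReal ((γ / q * (1 - p / q)) ^ (-(1 / γ))) *
        ((⨆ s ∈ Ioc (0:ℝ) (k ^ p), ENNReal.ofReal s * μ {x ∈ E | s < |u x| ^ p}) ^ (1 / q) *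
          ENNReal.ofReal k ^ (1 - p / q)) ≤
      ENNReal.ofReal ((γ / q * (1 - p / q)) ^ (-(1 / γ))) *
        (((⨆ t ∈ Ioi (0:ℝ), ENNReal.ofReal t * μ {x ∈ E | t < |u x| ^ p}) ^ (1 / p)) ^ (p / q) *
          ENNReal.ofReal k ^ (1 - p / q)) := by
  have hq : 0 < q := hp.trans hpq
  constructor
  · rw [← rpow_mul_ofReal_rpow_one_div hk hq hpq hγ]
    exact ENNReal.rpow_le_rpow (lintegral_measure_lt_min_rpow_le
      (fun s hs => le_biSup (fun t => ENNReal.ofReal t * μ {x ∈ E | t < |u x| ^ p}) hs)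
      hk hp hpq hγ) (by positivity)
  · rw [← ENNReal.rpow_mul, one_div_mul_eq_div, div_div_cancel_left' hp.ne', ← one_div]
    gcongr
    exact iSup_const_mono fun hs => hs.1
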